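/- arXiv:2309.07735 — 5 statements merged into one kernel-verified Lean document; each statement's English description precedes it below -/
import Mathlib

section
/- Let m > 0 and fix β ∈ ℝ. For real α with α < −β₋²/(8πm), define g(α) := 8πm·(−log(√(β² − 8πmα) − β) + β/(√(β² − 8πmα) − β)). Then at every such α, g is differentiable with derivative g'(α) = 2C², where C = 4πm/(√(β² − 8πmα) − β). -/
/-!
With `s = √(β² − cα)` and `u = s − β`, one has `u' = −c/(2s)` and `u + β = s`, so the derivative
of `−log u + β/u`, namely `−u'(u + β)/u²`, collapses to `c/(2u²)`. Multiplying by `c` gives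
`2(c/(2u))²`; for `c = 8πm` this is `2C²`. The hypothesis on `α` is exactly what makes `u > 0`.
-/

open Real

theorem hasDerivAt_neg_log_add_div {f : ℝ → ℝ} {f' x : ℝ} (β : ℝ) (hf : HasDerivAt f f' x)
    (hfx : f x ≠ 0) :
    HasDerivAt (fun a => -log (f a) + β / f a) (-f' * (f x + β) / f x ^ 2) x := by
  have hlog := (hf.log hfx).neg
  have hdiv := (hf.inv hfx).const_mul β
  simp only [div_eq_mul_inv]
  refine (hlog.add hdiv).congr_deriv ?_
  field_simp
  ring

theorem hasDerivAt_sqrt_const_sub_mul {b c x : ℝ} (hx : 0 < b - c * x) :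
    HasDerivAt (fun a => √(b - c * a)) (-c / (2 * √(b - c * x))) x := by
  have hlin : HasDerivAt (fun a => b - c * a) (-c) x := by
    simpa using ((hasDerivAt_id x).const_mul c).const_sub b
  convert hlin.sqrt hx.ne' using 1

theorem lt_sqrt_sq_sub_of_mul_lt {β c α : ℝ} (h : c * α < -max (-β) 0 ^ 2) :
    β < √(β ^ 2 - c * α) := by
  have hpos : 0 < β ^ 2 - c * α := by nlinarith [sq_nonneg (max (-β) 0)]
  rcases le_or_gt β 0 with hβ | hβ
  · exact hβ.trans_lt (sqrt_pos.mpr hpos)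
  · rw [max_eq_right (by linarith)] at h
    exact (lt_sqrt hβ.le).mpr (by linarith)

theorem hasDerivAt_mul_neg_log_add_div {β c α : ℝ} (h : c * α < -max (-β) 0 ^ 2) :
    HasDerivAt
      (fun a => c * (-log (√(β ^ 2 - c * a) - β) + β / (√(β ^ 2 - c * a) - β)))
      (2 * (c / 2 / (√(β ^ 2 - c * α) - β)) ^ 2) α := by
  have hu : 0 < √(β ^ 2 - c * α) - β := sub_pos.mpr (lt_sqrt_sq_sub_of_mul_lt h)
  have hpos : 0 < β ^ 2 - c * α := by nlinarith [sq_nonneg (max (-β) 0)]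
  have hsqrt := hasDerivAt_sqrt_const_sub_mul (b := β ^ 2) hpos
  refine ((hasDerivAt_neg_log_add_div β (hsqrt.sub_const β) hu.ne').const_mul c).congr_deriv ?_
  have hs : √(β ^ 2 - c * α) ≠ 0 := (sqrt_pos.mpr hpos).ne'
  field_simp
  ring

/-- Proposition 2.3, case `χ(Σ) < 0` (with `m = |χ(Σ)|`): the partial derivative
in `α` of `F(α, β) = 8πm(−log(√(β² − 8πmα) − β) + β/(√(β² − 8πmα) − β))` equals
`2C²`, where `C = 4πm/(√(β² − 8πmα) − β)`. -/
theorem stmt_11 (m β : ℝ) (hm : 0 < m) (α : ℝ)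
    (hα : α < -(max (-β) 0) ^ 2 / (8 * π * m)) :
    HasDerivAt
      (fun a : ℝ =>
        8 * π * m *
          (-Real.log (Real.sqrt (β ^ 2 - 8 * π * m * a) - β) +
            β / (Real.sqrt (β ^ 2 - 8 * π * m * a) - β)))
      (2 * (4 * π * m / (Real.sqrt (β ^ 2 - 8 * π * m * α) - β)) ^ 2) α := by
  have hc : 0 < 8 * π * m := by positivity
  have h : 8 * π * m * α < -max (-β) 0 ^ 2 := by
    rw [lt_div_iff₀ hc] at hα
    linarith
  convert hasDerivAt_mul_neg_log_add_div h using 3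
  ring
end

section
/- Let m > 0 and fix α ∈ ℝ. For real β with α < −β₋²/(8πm), define g(β) := 8πm·(−log(√(β² − 8πmα) − β) + β/(√(β² − 8πmα) − β)). Then at every such β, g is differentiable with derivative g'(β) = 4C, where C = 4πm/(√(β² − 8πmα) − β). -/
open Real

/-! Write `s = √(β² − c)` and `h = s − β > 0`. Then `h' = β/s − 1 = −h/s`, so `−log h` has
derivative `1/s` and `b/h` has derivative `(s + β)/(s h)`; these add up to `2/h`. -/

lemma sq_sub_pos_of_lt_neg_negPart_sq {β c : ℝ} (hc : c < -(max (-β) 0) ^ 2) :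
    0 < β ^ 2 - c := by
  nlinarith [sq_nonneg β, sq_nonneg (max (-β) 0)]

lemma lt_sqrt_sq_sub_of_lt_neg_negPart_sq {β c : ℝ} (hc : c < -(max (-β) 0) ^ 2) :
    β < √(β ^ 2 - c) := by
  rcases lt_or_ge β 0 with hβ | hβ
  · exact hβ.trans_le (Real.sqrt_nonneg _)
  · have hc0 : c < 0 := by simpa [max_eq_right (neg_nonpos.mpr hβ)] using hc
    exact (Real.lt_sqrt hβ).mpr (by linarith)

lemma hasDerivAt_sqrt_sq_sub_sub {β c : ℝ} (hD : 0 < β ^ 2 - c) :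
    HasDerivAt (fun b : ℝ => √(b ^ 2 - c) - b) (β / √(β ^ 2 - c) - 1) β := by
  have hsq : HasDerivAt (fun b : ℝ => b ^ 2 - c) (2 * β) β := by
    simpa using (hasDerivAt_pow 2 β).sub_const c
  exact ((hsq.sqrt hD.ne').sub (hasDerivAt_id' β)).congr_deriv
    (by rw [mul_div_mul_left _ _ two_ne_zero])

lemma hasDerivAt_neg_log_add_div_sqrt_sq_sub_sub {β c : ℝ} (hD : 0 < β ^ 2 - c)
    (hβ : β < √(β ^ 2 - c)) :
    HasDerivAt (fun b : ℝ => -Real.log (√(b ^ 2 - c) - b) + b / (√(b ^ 2 - c) - b))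
      (2 / (√(β ^ 2 - c) - β)) β := by
  have hh := hasDerivAt_sqrt_sq_sub_sub hD
  have hne : √(β ^ 2 - c) - β ≠ 0 := (sub_pos.mpr hβ).ne'
  refine ((hh.log hne).neg.add ((hasDerivAt_id' β).div hh hne)).congr_deriv ?_
  have hs : √(β ^ 2 - c) ≠ 0 := (Real.sqrt_pos.mpr hD).ne'
  field_simp
  ring

/-- Proposition 2.3, case `χ(Σ) < 0` (with `m = |χ(Σ)|`): the partial derivative
in `β` of `F(α, β) = 8πm(−log(√(β² − 8πmα) − β) + β/(√(β² − 8πmα) − β))` equals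
`4C`, where `C = 4πm/(√(β² − 8πmα) − β)`. -/
theorem stmt_12 (m α : ℝ) (hm : 0 < m) (β : ℝ)
    (hα : α < -(max (-β) 0) ^ 2 / (8 * π * m)) :
    HasDerivAt
      (fun b : ℝ =>
        8 * π * m *
          (-Real.log (Real.sqrt (b ^ 2 - 8 * π * m * α) - b) +
            b / (Real.sqrt (b ^ 2 - 8 * π * m * α) - b)))
      (4 * (4 * π * m / (Real.sqrt (β ^ 2 - 8 * π * m * α) - β))) β := by
  have hc : 8 * π * m * α < -(max (-β) 0) ^ 2 := by
    have h8 : 0 < 8 * π * m := by positivity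
    rwa [lt_div_iff₀ h8, mul_comm] at hα
  have hg := (hasDerivAt_neg_log_add_div_sqrt_sq_sub_sub (sq_sub_pos_of_lt_neg_negPart_sq hc)
    (lt_sqrt_sq_sub_of_lt_neg_negPart_sq hc)).const_mul (8 * π * m)
  exact hg.congr_deriv (by ring)
end

section
/- Let m > 0. For every ε > 0 there exists a constant C_ε > 0 such that for all t ∈ ℝ, 8πm·(−log(√(t² + 8πm) − t) + t/(√(t² + 8πm) − t)) ≤ (2 + ε)·t₊² + C_ε, where t₊ := max{t, 0}. -/
/-!
Put `a = 8πm`, `r = √(t² + a)` and `u = r + t > 0`. Since `(r - t) u = a`, the left-hand side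
equals `a log u - a log a + t u`. Now `u ≤ 2 t₊ + √a` and `log u ≤ u`, so the left-hand side is
at most `2 t₊² + (2a + √a) t₊ + const`, and Young's inequality absorbs the linear term into
`ε t₊²`.
-/

open Real

lemma mul_le_mul_sq_add_sq_div_four_mul (e k x : ℝ) (he : 0 < e) : k * x ≤ e * x ^ 2 + k ^ 2 / (4 * e) := by
  have hk : k * x - e * x ^ 2 ≤ k ^ 2 / (4 * e) := by
    rw [le_div_iff₀ (by positivity)]
    nlinarith [sq_nonneg (2 * e * x - k)]
  linarith

section SqrtSqAdd

variable {a : ℝ} (t : ℝ)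

lemma sqrt_sq_add_sub_mul_sqrt_sq_add_add (ha : 0 ≤ a) :
    (√(t ^ 2 + a) - t) * (√(t ^ 2 + a) + t) = a := by
  have hsq : √(t ^ 2 + a) ^ 2 = t ^ 2 + a := sq_sqrt (by positivity)
  linear_combination hsq

lemma abs_lt_sqrt_sq_add (ha : 0 < a) : |t| < √(t ^ 2 + a) := by
  rw [← sqrt_sq_eq_abs]
  exact sqrt_lt_sqrt (sq_nonneg t) (by linarith)

lemma sqrt_sq_add_add_pos (ha : 0 < a) : 0 < √(t ^ 2 + a) + t := by
  linarith [neg_abs_le t, abs_lt_sqrt_sq_add t ha]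

lemma sqrt_sq_add_add_le (ha : 0 ≤ a) : √(t ^ 2 + a) + t ≤ 2 * max t 0 + √a := by
  have hsqrt : √(t ^ 2 + a) ≤ |t| + √a := by
    rw [sqrt_le_left (by positivity)]
    nlinarith [sq_abs t, abs_nonneg t, sqrt_nonneg a, sq_sqrt ha]
  have habs : |t| + t ≤ 2 * max t 0 := by
    rcases le_total t 0 with h | h
    · rw [abs_of_nonpos h, max_eq_right h]; linarith
    · rw [abs_of_nonneg h, max_eq_left h]; linarith
  linarith

lemma mul_neg_log_add_div_eq (ha : 0 < a) :
    a * (-log (√(t ^ 2 + a) - t) + t / (√(t ^ 2 + a) - t)) =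
      a * log (√(t ^ 2 + a) + t) - a * log a + t * (√(t ^ 2 + a) + t) := by
  have hu := sqrt_sq_add_add_pos t ha
  have hs : √(t ^ 2 + a) - t = a / (√(t ^ 2 + a) + t) := by
    rw [eq_div_iff hu.ne']
    exact sqrt_sq_add_sub_mul_sqrt_sq_add_add t ha.le
  rw [hs, log_div ha.ne' hu.ne']
  field_simp
  ring

lemma mul_neg_log_add_div_le (ha : 0 < a) :
    a * (-log (√(t ^ 2 + a) - t) + t / (√(t ^ 2 + a) - t)) ≤
      2 * max t 0 ^ 2 + (2 * a + √a) * max t 0 + (a * √a - a * log a) := by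
  set u := √(t ^ 2 + a) + t
  set T := max t 0
  have hu : 0 < u := sqrt_sq_add_add_pos t ha
  have hub : u ≤ 2 * T + √a := sqrt_sq_add_add_le t ha.le
  have hT : 0 ≤ T := le_max_right t 0
  have hlog : a * log u ≤ a * (2 * T + √a) :=
    mul_le_mul_of_nonneg_left ((log_le_self hu.le).trans hub) ha.le
  have hlin : t * u ≤ T * (2 * T + √a) :=
    calc t * u ≤ T * u := mul_le_mul_of_nonneg_right (le_max_left t 0) hu.le
      _ ≤ T * (2 * T + √a) := mul_le_mul_of_nonneg_left hub hT
  rw [mul_neg_log_add_div_eq t ha]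
  linarith

end SqrtSqAdd

theorem mul_neg_log_add_div_le_two_add_mul_sq_add {a : ℝ} (ha : 0 < a) :
    ∀ ε > 0, ∃ C > 0, ∀ t : ℝ,
      a * (-log (√(t ^ 2 + a) - t) + t / (√(t ^ 2 + a) - t)) ≤
        (2 + ε) * max t 0 ^ 2 + C := by
  intro ε hε
  set K := 2 * a + √a
  set c := a * √a - a * log a
  refine ⟨K ^ 2 / (4 * ε) + |c| + 1, by positivity, fun t => ?_⟩
  have hyoung := mul_le_mul_sq_add_sq_div_four_mul ε K (max t 0) hε
  linarith [mul_neg_log_add_div_le t ha, le_abs_self c]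

/-- Lemma 4.4: for `m > 0` and every `ε > 0` there is `C_ε > 0` with
`8πm(−log(√(t² + 8πm) − t) + t/(√(t² + 8πm) − t)) ≤ (2 + ε)t₊² + C_ε`. -/
theorem stmt_15 (m : ℝ) (hm : 0 < m) :
    ∀ ε > 0, ∃ Cε > 0, ∀ t : ℝ,
      8 * π * m *
          (-Real.log (Real.sqrt (t ^ 2 + 8 * π * m) - t) +
            t / (Real.sqrt (t ^ 2 + 8 * π * m) - t)) ≤
        (2 + ε) * (max t 0) ^ 2 + Cε :=
  mul_neg_log_add_div_le_two_add_mul_sq_add (by positivity)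
end

section
/- Let X be a nonempty compact metric space equipped with a nonzero finite Borel measure μ whose topological support is all of X, and let K : X → ℝ be continuous. Then there exists a continuous function u : X → ℝ with ∫_X K e^u dμ > 0 if and only if K(x) > 0 for some x ∈ X. -/
/-!
If `K ≤ 0` then `K e^u ≤ 0` pointwise. Conversely, if `K(x₀) > 0`, fix `0 < δ < K(x₀)` and take
`u = c K`: the integrand `K e^{cK}` is at least `δ e^{cδ}` on the open set `{K > δ}`, which has
positive measure, it is nonnegative where `K ≥ 0`, and it is at least `K` where `K < 0`. Hence
`∫ K e^{cK} ≥ δ e^{cδ} μ{K > δ} + ∫ min K 0`, which is positive for `c` large.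
-/

open Real MeasureTheory Filter Set

lemma indicator_mul_exp_add_min_zero_le_mul_exp {c δ : ℝ} (hc : 0 ≤ c) (hδ : 0 ≤ δ) (t : ℝ) :
    (Ioi δ).indicator (fun _ => δ * exp (c * δ)) t + min t 0 ≤ t * exp (c * t) := by
  rcases lt_or_ge δ t with hδt | htδ
  · have hmono : δ * exp (c * δ) ≤ t * exp (c * t) :=
      mul_le_mul hδt.le (exp_le_exp.2 (by nlinarith)) (exp_pos _).le (hδ.trans hδt.le)
    simpa [indicator_of_mem (show t ∈ Ioi δ from hδt), min_eq_right (hδ.trans hδt.le)] using hmono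
  · rw [indicator_of_notMem (show t ∉ Ioi δ from not_lt.2 htδ), zero_add]
    rcases le_total 0 t with ht | ht
    · rw [min_eq_right ht]
      positivity
    · rw [min_eq_left ht]
      have : exp (c * t) ≤ 1 := exp_le_one_iff.2 (mul_nonpos_of_nonneg_of_nonpos hc ht)
      nlinarith

section CompactSpace

variable {X : Type*} [TopologicalSpace X] [CompactSpace X] [MeasurableSpace X]
  [OpensMeasurableSpace X] {μ : Measure X} [IsFiniteMeasure μ] {K : X → ℝ}

lemma le_integral_mul_exp_const_mul (hK : Continuous K) {c δ : ℝ} (hc : 0 ≤ c) (hδ : 0 ≤ δ) :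
    δ * exp (c * δ) * μ.real {x | δ < K x} + ∫ x, min (K x) 0 ∂μ ≤
      ∫ x, K x * exp (c * K x) ∂μ := by
  have integrable {f : X → ℝ} (hf : Continuous f) : Integrable f μ :=
    hf.integrable_of_hasCompactSupport (HasCompactSupport.of_compactSpace f)
  have hU : MeasurableSet {x | δ < K x} := (isOpen_lt continuous_const hK).measurableSet
  have hind : (fun x => (Ioi δ).indicator (fun _ => δ * exp (c * δ)) (K x)) =
      {x | δ < K x}.indicator (fun _ => δ * exp (c * δ)) :=
    funext fun x => (indicator_comp_right K).symm
  have hconst := (integrable_const (μ := μ) (δ * exp (c * δ))).indicator hU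
  rw [← hind] at hconst
  rw [mul_comm _ (μ.real _), ← smul_eq_mul, ← integral_indicator_const _ hU, ← hind,
    ← integral_add hconst (integrable (hK.min continuous_const))]
  exact integral_mono (hconst.add (integrable (hK.min continuous_const)))
    (integrable (hK.mul (continuous_const.mul hK).rexp))
    fun x => indicator_mul_exp_add_min_zero_le_mul_exp hc hδ (K x)

lemma exists_pos_integral_mul_exp_const_mul [μ.IsOpenPosMeasure] (hK : Continuous K) {x₀ : X}
    (hx₀ : 0 < K x₀) : ∃ c, 0 < ∫ x, K x * exp (c * K x) ∂μ := by
  set δ := K x₀ / 2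
  have hδ : 0 < δ := by positivity
  have hU : 0 < μ.real {x | δ < K x} :=
    ENNReal.toReal_pos ((isOpen_lt continuous_const hK).measure_pos μ ⟨x₀, by simp [δ, hx₀]⟩).ne'
      (measure_ne_top μ _)
  have hgrowth : Tendsto (fun c => δ * exp (c * δ) * μ.real {x | δ < K x}) atTop atTop :=
    ((tendsto_exp_atTop.comp (tendsto_id.atTop_mul_const hδ)).const_mul_atTop hδ).atTop_mul_const
      hU
  obtain ⟨c, hlarge, hc⟩ :=
    ((hgrowth.eventually_gt_atTop (-∫ x, min (K x) 0 ∂μ)).and (eventually_ge_atTop 0)).exists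
  exact ⟨c, by linarith [le_integral_mul_exp_const_mul (μ := μ) hK hc hδ.le]⟩

end CompactSpace

theorem stmt_17_general {X : Type*} [MetricSpace X] [CompactSpace X]
    [MeasurableSpace X] [BorelSpace X]
    (μ : Measure X) [IsFiniteMeasure μ] [μ.IsOpenPosMeasure]
    (K : X → ℝ) (hK : Continuous K) :
    (∃ u : X → ℝ, Continuous u ∧ 0 < ∫ x, K x * Real.exp (u x) ∂μ) ↔
      ∃ x : X, 0 < K x := by
  constructor
  · rintro ⟨u, -, hpos⟩
    by_contra! hK_nonpos
    exact hpos.not_ge <|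
      integral_nonpos fun x => mul_nonpos_of_nonpos_of_nonneg (hK_nonpos x) (exp_pos _).le
  · rintro ⟨x₀, hx₀⟩
    obtain ⟨c, hc⟩ := exists_pos_integral_mul_exp_const_mul (μ := μ) hK hx₀
    exact ⟨fun x => c * K x, continuous_const.mul hK, hc⟩

/-- Abstract formulation of the interior case of Lemma 2.4(1): on a nonempty
compact metric space with a nonzero finite Borel measure of full support,
there is a continuous `u` with `∫ K e^u dμ > 0` iff `K` is positive somewhere. -/
theorem stmt_17 {X : Type*} [MetricSpace X] [CompactSpace X] [Nonempty X]
    [MeasurableSpace X] [BorelSpace X]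
    (μ : Measure X) [IsFiniteMeasure μ] (hμ : μ ≠ 0) [μ.IsOpenPosMeasure]
    (K : X → ℝ) (hK : Continuous K) :
    (∃ u : X → ℝ, Continuous u ∧ 0 < ∫ x, K x * Real.exp (u x) ∂μ) ↔
      ∃ x : X, 0 < K x :=
  stmt_17_general μ K hK
end

section
/- Let X be a compact metric space, let μ and σ be finite Borel measures on X, and let K, h : X → ℝ be continuous. Suppose there is a closed set Γ ⊆ X with σ(X ∖ Γ) = 0 and μ(Γ) = 0, and a point y₀ ∈ Γ with h(y₀) > 0 and σ(B(y₀, r)) > 0 for every r > 0, where B(y₀, r) denotes the open metric ball. Then for every constant c > 0 there exists a continuous function u : X → [0, ∞) such that ∫_X h e^{u/2} dσ > √(c · ∫_X |K| e^u dμ). -/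
/-!
Take `u = 2C f`, where `f` is an Urysohn function equal to `1` on `A = B̄(y₀, r/2) ∩ Γ`,
vanishing off the ball `B(y₀, r)` on which `h > h(y₀)/2`, and whose support has
`μ`-measure `< e^{-2C}` (possible because `μ(Γ) = 0` and `μ` is outer regular). Then
`∫ |K| e^u dμ ≤ sup |K| · (μ(X) + 1)` whatever `C` is, whereas
`∫ h e^{u/2} dσ ≥ ∫ h dσ + (h(y₀)/2)(e^C - 1) σ(A)`, and `σ(A) ≥ σ(B(y₀, r/2)) > 0`
because `σ` does not charge the complement of `Γ`. Take `C` large.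
-/

open Real MeasureTheory Function Set Metric

section

variable {X : Type*} [MeasurableSpace X]

theorem exists_continuous_eqOn_one_eqOn_zero_measure_support_lt [TopologicalSpace X]
    [NormalSpace X] (μ : Measure X) [μ.OuterRegular] {A U : Set X} (hA : IsClosed A)
    (hU : IsOpen U) (hAU : A ⊆ U) (hμA : μ A = 0) {ε : ENNReal} (hε : 0 < ε) :
    ∃ f : C(X, ℝ), EqOn f 1 A ∧ EqOn f 0 Uᶜ ∧ (∀ x, f x ∈ Icc (0 : ℝ) 1) ∧
      μ (support f) < ε := by
  obtain ⟨V, hAV, hV, hμV⟩ := A.exists_isOpen_lt_of_lt ε (hμA ▸ hε)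
  obtain ⟨f, hf0, hf1, hf01⟩ := exists_continuous_zero_one_of_isClosed
    (hU.inter hV).isClosed_compl hA (disjoint_compl_left_iff_subset.2 (subset_inter hAU hAV))
  refine ⟨f, hf1, fun x hx => hf0 fun hxUV => hx hxUV.1, hf01, ?_⟩
  have hsupp : support f ⊆ V := fun x hx => by_contra fun hxV => hx (hf0 fun h => hxV h.2)
  exact (measure_mono hsupp).trans_lt hμV

theorem integral_abs_mul_exp_le (μ : Measure X) [IsFiniteMeasure μ] {g u : X → ℝ} {M C : ℝ}
    (hu : Measurable u) (hgM : ∀ x, |g x| ≤ M) (huC : ∀ x, u x ≤ C) :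
    ∫ x, |g x| * exp (u x) ∂μ ≤ M * (μ.real univ + exp C * μ.real (support u)) := by
  have hmeas : MeasurableSet (support u) := measurableSet_support hu
  have hbound : ∀ x, |g x| * exp (u x) ≤ M * (1 + (support u).indicator (fun _ => exp C) x) := by
    intro x
    have hM : 0 ≤ M := (abs_nonneg _).trans (hgM x)
    have hexp : exp (u x) ≤ 1 + (support u).indicator (fun _ => exp C) x := by
      by_cases hx : u x = 0
      · simp [hx]
      · rw [indicator_of_mem hx]
        linarith [exp_le_exp.2 (huC x)]
    exact mul_le_mul (hgM x) hexp (exp_pos _).le hM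
  calc ∫ x, |g x| * exp (u x) ∂μ
      ≤ ∫ x, M * (1 + (support u).indicator (fun _ => exp C) x) ∂μ :=
        integral_mono_of_nonneg (ae_of_all _ fun x => by positivity)
          (((integrable_const 1).add ((integrable_const _).indicator hmeas)).const_mul M)
          (ae_of_all _ hbound)
    _ = M * (μ.real univ + exp C * μ.real (support u)) := by
        rw [integral_const_mul, integral_add (integrable_const 1)
          ((integrable_const _).indicator hmeas), integral_indicator_const _ hmeas,
          integral_const, smul_eq_mul, smul_eq_mul, mul_one, mul_comm (μ.real _)]

theorem integral_abs_mul_exp_le_of_measure_support_le (μ : Measure X) [IsFiniteMeasure μ]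
    {g u : X → ℝ} {M C : ℝ} (hu : Measurable u) (hM : 0 ≤ M) (hgM : ∀ x, |g x| ≤ M)
    (huC : ∀ x, u x ≤ C) (hμu : μ (support u) ≤ ENNReal.ofReal (exp (-C))) :
    ∫ x, |g x| * exp (u x) ∂μ ≤ M * (μ.real univ + 1) := by
  have hexp : exp C * μ.real (support u) ≤ 1 := by
    calc exp C * μ.real (support u) ≤ exp C * exp (-C) := by
          gcongr
          exact ENNReal.toReal_le_of_le_ofReal (exp_pos _).le hμu
      _ = 1 := by rw [← exp_add, add_neg_cancel, exp_zero]
  exact (integral_abs_mul_exp_le μ hu hgM huC).trans (by gcongr)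

theorem integral_add_le_integral_mul_exp (σ : Measure X) [IsFiniteMeasure σ]
    {h v : X → ℝ} {A B : Set X} {a C : ℝ} (hh : Integrable h σ)
    (hhv : Integrable (fun x => h x * exp (v x)) σ) (hA : MeasurableSet A)
    (hhB : ∀ x ∈ B, 0 ≤ h x) (hhA : ∀ x ∈ A, a ≤ h x) (hv : ∀ x, 0 ≤ v x)
    (hvB : EqOn v 0 Bᶜ) (hvA : EqOn v (fun _ => C) A) :
    ∫ x, h x ∂σ + a * (exp C - 1) * σ.real A ≤ ∫ x, h x * exp (v x) ∂σ := by
  have hbound : ∀ x, h x + A.indicator (fun _ => a * (exp C - 1)) x ≤ h x * exp (v x) := by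
    intro x
    by_cases hxA : x ∈ A
    · rw [indicator_of_mem hxA, hvA hxA]
      have hC : 1 ≤ exp C := one_le_exp (by simpa [hvA hxA] using hv x)
      nlinarith [hhA x hxA]
    rw [indicator_of_notMem hxA, add_zero]
    by_cases hxB : x ∈ B
    · exact le_mul_of_one_le_right (hhB x hxB) (one_le_exp (hv x))
    · simp [hvB hxB]
  calc ∫ x, h x ∂σ + a * (exp C - 1) * σ.real A
      = ∫ x, (h x + A.indicator (fun _ => a * (exp C - 1)) x) ∂σ := by
        rw [integral_add hh ((integrable_const _).indicator hA), integral_indicator_const _ hA,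
          smul_eq_mul, mul_comm]
    _ ≤ ∫ x, h x * exp (v x) ∂σ :=
        integral_mono (hh.add ((integrable_const _).indicator hA)) hhv hbound

end

theorem exists_mul_exp_sub_one_gt {b : ℝ} (hb : 0 < b) (R : ℝ) :
    ∃ C : ℝ, 0 ≤ C ∧ R < b * (exp C - 1) := by
  refine ⟨|R| / b + 1, by positivity, ?_⟩
  calc R < |R| + b := by linarith [le_abs_self R]
    _ = b * (|R| / b + 1) := by field_simp
    _ ≤ b * (exp (|R| / b + 1) - 1) := by gcongr; linarith [add_one_le_exp (|R| / b + 1)]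

theorem stmt_19_general {X : Type*} [MetricSpace X] [CompactSpace X]
    [MeasurableSpace X] [BorelSpace X]
    (μ σ : Measure X) [IsFiniteMeasure μ] [IsFiniteMeasure σ]
    (K h : X → ℝ) (hK : Continuous K) (hh : Continuous h)
    (Γ : Set X) (hΓ : IsClosed Γ) (hσΓ : σ Γᶜ = 0) (hμΓ : μ Γ = 0)
    (y₀ : X) (hhy₀ : 0 < h y₀)
    (hball : ∀ r : ℝ, 0 < r → 0 < σ (Metric.ball y₀ r)) :
    ∀ c : ℝ, 0 < c → ∃ u : X → ℝ, Continuous u ∧ (∀ x, 0 ≤ u x) ∧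
      Real.sqrt (c * ∫ x, |K x| * Real.exp (u x) ∂μ) <
        ∫ x, h x * Real.exp (u x / 2) ∂σ := by
  intro c hc
  obtain ⟨r, hr, hrh⟩ : ∃ r > 0, ball y₀ r ⊆ {x | h y₀ / 2 < h x} :=
    Metric.mem_nhds_iff.1 (hh.continuousAt.preimage_mem_nhds (Ioi_mem_nhds (half_lt_self hhy₀)))
  obtain ⟨M, hM⟩ := isCompact_univ.exists_bound_of_continuousOn hK.continuousOn
  have hM0 : 0 ≤ M := (norm_nonneg _).trans (hM y₀ (mem_univ _))
  set A := closedBall y₀ (r / 2) ∩ Γ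
  have hAB : A ⊆ ball y₀ r := fun x hx => closedBall_subset_ball (half_lt_self hr) hx.1
  have hσA : 0 < σ.real A := by
    refine ENNReal.toReal_pos ?_ (measure_ne_top _ _)
    rw [measure_inter_conull hσΓ]
    exact ((hball _ (half_pos hr)).trans_le (measure_mono ball_subset_closedBall)).ne'
  obtain ⟨C, hC, hCbig⟩ := exists_mul_exp_sub_one_gt (mul_pos (half_pos hhy₀) hσA)
    (√(c * (M * (μ.real univ + 1))) - ∫ x, h x ∂σ)
  obtain ⟨f, hfA, hfB, hf01, hfμ⟩ := exists_continuous_eqOn_one_eqOn_zero_measure_support_lt μ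
    (isClosed_closedBall.inter hΓ) isOpen_ball hAB
    (measure_mono_null inter_subset_right hμΓ) (ENNReal.ofReal_pos.2 (exp_pos (-(2 * C))))
  set u : X → ℝ := fun x => 2 * C * f x
  have hu : Continuous u := continuous_const.mul f.continuous
  refine ⟨u, hu, fun x => by have := (hf01 x).1; positivity, ?_⟩
  calc √(c * ∫ x, |K x| * exp (u x) ∂μ) ≤ √(c * (M * (μ.real univ + 1))) := by
        gcongr
        exact integral_abs_mul_exp_le_of_measure_support_le μ hu.measurable hM0
          (fun x => hM x (mem_univ x)) (fun x => mul_le_of_le_one_right (by positivity) (hf01 x).2)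
          ((measure_mono (support_mul_subset_right _ f)).trans hfμ.le)
    _ < ∫ x, h x ∂σ + h y₀ / 2 * (exp C - 1) * σ.real A := by linarith
    _ ≤ ∫ x, h x * exp (u x / 2) ∂σ :=
      integral_add_le_integral_mul_exp σ (hh.integrable_of_hasCompactSupport (.of_compactSpace _))
        ((hh.mul (hu.div_const 2).rexp).integrable_of_hasCompactSupport (.of_compactSpace _))
        (isClosed_closedBall.inter hΓ).measurableSet
        (fun x hx => (half_pos hhy₀).le.trans (hrh hx).le) (fun x hx => (hrh (hAB hx)).le)
        (fun x => by have := (hf01 x).1; positivity) (fun x hx => by simp [u, hfB hx])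
        (fun x hx => by simp [u, hfA hx])

/-- Abstract formulation of the boundary case of Lemma 2.4(1): if `h > 0` at a
point `y₀` of the "boundary" `Γ` charged by `σ` near `y₀`, while `μ` does not
charge `Γ`, then for every `c > 0` there is a continuous `u ≥ 0` with
`∫ h e^{u/2} dσ > √(c ∫ |K| e^u dμ)`. -/
theorem stmt_19 {X : Type*} [MetricSpace X] [CompactSpace X]
    [MeasurableSpace X] [BorelSpace X]
    (μ σ : Measure X) [IsFiniteMeasure μ] [IsFiniteMeasure σ]
    (K h : X → ℝ) (hK : Continuous K) (hh : Continuous h)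
    (Γ : Set X) (hΓ : IsClosed Γ) (hσΓ : σ Γᶜ = 0) (hμΓ : μ Γ = 0)
    (y₀ : X) (hy₀ : y₀ ∈ Γ) (hhy₀ : 0 < h y₀)
    (hball : ∀ r : ℝ, 0 < r → 0 < σ (Metric.ball y₀ r)) :
    ∀ c : ℝ, 0 < c → ∃ u : X → ℝ, Continuous u ∧ (∀ x, 0 ≤ u x) ∧
      Real.sqrt (c * ∫ x, |K x| * Real.exp (u x) ∂μ) <
        ∫ x, h x * Real.exp (u x / 2) ∂σ :=
  stmt_19_general μ σ K h hK hh Γ hΓ hσΓ hμΓ y₀ hhy₀ hball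
end
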